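/- arXiv:math/0502534 — 2 statements merged into one kernel-verified Lean document; each statement's English description precedes it below -/
import Mathlib

section
/- The submonoid Ŝₙ° = (ℤ_{≥0})ⁿ ⋊ 𝔖ₙ of the extended affine Weyl group Ŝₙ = ℤⁿ ⋊ 𝔖ₙ is exactly the submonoid of Ŝₙ generated by the set {π, s₁, s₂, …, s_{n−1}}. -/
open SemidirectProduct

/-- The action of the symmetric group on `Fin n → ℤ` by permuting coordinates,
as a homomorphism into the automorphisms of the (multiplicatively written) translation lattice. -/
def permAction (n : ℕ) : Equiv.Perm (Fin n) →* MulAut (Multiplicative (Fin n → ℤ)) where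
  toFun σ :=
    { toFun := fun η => Multiplicative.ofAdd fun i => Multiplicative.toAdd η (σ⁻¹ i)
      invFun := fun η => Multiplicative.ofAdd fun i => Multiplicative.toAdd η (σ i)
      left_inv := fun η => funext fun i => by simp
      right_inv := fun η => funext fun i => by simp
      map_mul' := fun η μ => rfl }
  map_one' := by ext η; rfl
  map_mul' := fun σ τ => by ext η : 1; exact funext fun i => by simp [Equiv.Perm.mul_apply]

/-- The extended affine Weyl group `ℤⁿ ⋊ 𝔖ₙ`. -/
abbrev Shat (n : ℕ) :=
  SemidirectProduct (Multiplicative (Fin n → ℤ)) (Equiv.Perm (Fin n)) (permAction n)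

/-- The translation `t_η`. -/
def tr {n : ℕ} (η : Fin n → ℤ) : Shat n := inl (Multiplicative.ofAdd η)

/-- The simple reflection `sᵢ` (transposing `i` and `i+1`), as an element of `Ŝₙ`. -/
def simple {m : ℕ} (i : Fin (m + 1)) : Shat (m + 2) :=
  inr (Equiv.swap i.castSucc i.succ)

/-- The element `π = t_{e₁} s₁ s₂ ⋯ s_{n-1}`. -/
def piElt (m : ℕ) : Shat (m + 2) :=
  tr (Pi.single 0 1) *
    ((List.finRange (m + 1)).map fun i => simple i).prod

section Aux

variable {m : ℕ}

private abbrev genSet (m : ℕ) : Set (Shat (m + 2)) :=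
  insert (piElt m) (Set.range (simple (m := m)))

private lemma inr_mem (σ : Equiv.Perm (Fin (m + 2))) :
    inr σ ∈ Submonoid.closure (genSet m) := by
  have h : σ ∈ Submonoid.closure
      (Set.range fun i : Fin (m + 1) => Equiv.swap i.castSucc i.succ) := by
    rw [Equiv.Perm.mclosure_swap_castSucc_succ]; trivial
  have : Submonoid.closure
      (Set.range fun i : Fin (m + 1) => Equiv.swap i.castSucc i.succ) ≤
      (Submonoid.closure (genSet m)).comap
        (inr : Equiv.Perm (Fin (m + 2)) →* Shat (m + 2)) := by
    rw [Submonoid.closure_le]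
    rintro _ ⟨i, rfl⟩
    exact Submonoid.subset_closure (Or.inr ⟨i, rfl⟩)
  exact this h

private lemma prod_simples (m : ℕ) :
    ((List.finRange (m + 1)).map fun i => simple i).prod =
      inr (((List.finRange (m + 1)).map
        fun i : Fin (m + 1) => Equiv.swap i.castSucc i.succ).prod) := by
  rw [← List.prod_hom _ (inr : Equiv.Perm (Fin (m + 2)) →* Shat (m + 2)),
    List.map_map]
  rfl

private lemma tr_single_zero_mem :
    tr (Pi.single (0 : Fin (m + 2)) (1 : ℤ)) ∈ Submonoid.closure (genSet m) := by
  set τ := ((List.finRange (m + 1)).map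
    fun i : Fin (m + 1) => Equiv.swap i.castSucc i.succ).prod with hτ
  have hpi : piElt m = tr (Pi.single 0 1) * inr τ := by
    rw [piElt, prod_simples]
  have : tr (Pi.single (0 : Fin (m + 2)) (1 : ℤ)) = piElt m * inr τ⁻¹ := by
    rw [hpi, mul_assoc, ← map_mul, mul_inv_cancel, map_one, mul_one]
  rw [this]
  exact mul_mem (Submonoid.subset_closure (Or.inl rfl)) (inr_mem _)

private lemma permAction_single (σ : Equiv.Perm (Fin (m + 2))) (j : Fin (m + 2)) :
    (permAction (m + 2)) σ (Multiplicative.ofAdd (Pi.single j (1 : ℤ))) =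
      Multiplicative.ofAdd (Pi.single (σ j) (1 : ℤ)) := by
  apply congrArg Multiplicative.ofAdd
  funext i
  show (Pi.single j 1 : Fin (m + 2) → ℤ) (σ⁻¹ i) = (Pi.single (σ j) 1 : Fin (m + 2) → ℤ) i
  by_cases h : i = σ j
  · subst h; rw [Equiv.Perm.coe_inv, Equiv.symm_apply_apply, Pi.single_eq_same, Pi.single_eq_same]
  · rw [Pi.single_eq_of_ne h, Pi.single_eq_of_ne]
    intro hc
    exact h (by rw [← hc]; simp)

private lemma tr_single_mem (j : Fin (m + 2)) :
    tr (Pi.single j (1 : ℤ)) ∈ Submonoid.closure (genSet m) := by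
  have key : tr (Pi.single j (1 : ℤ)) =
      inr (Equiv.swap (0 : Fin (m + 2)) j) * tr (Pi.single 0 1) *
        inr (Equiv.swap (0 : Fin (m + 2)) j)⁻¹ := by
    simp only [tr]
    rw [← inl_aut, permAction_single, Equiv.swap_apply_left]
  rw [key]
  exact mul_mem (mul_mem (inr_mem _) tr_single_zero_mem) (inr_mem _)

private lemma tr_mul (η μ : Fin (m + 2) → ℤ) : tr η * tr μ = tr (η + μ) := by
  rw [tr, tr, tr, ← map_mul]; rfl

private lemma tr_nonneg_mem_aux (N : ℕ) : ∀ (η : Fin (m + 2) → ℤ), (∀ i, 0 ≤ η i) →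
    (Finset.univ.sum fun i => (η i).toNat) = N → tr η ∈ Submonoid.closure (genSet m) := by
  induction N using Nat.strong_induction_on with
  | _ N ih =>
    intro η hη hN
    by_cases h0 : ∀ i, η i = 0
    · have : η = 0 := funext h0
      rw [this]
      have : tr (0 : Fin (m + 2) → ℤ) = 1 := rfl
      rw [this]; exact one_mem _
    · push_neg at h0
      obtain ⟨j, hj⟩ := h0
      have hjpos : 0 < η j := lt_of_le_of_ne (hη j) (Ne.symm hj)
      have hη' : ∀ i, 0 ≤ (η - Pi.single j 1 : Fin (m + 2) → ℤ) i := by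
        intro i
        by_cases hij : i = j
        · subst hij; simp only [Pi.sub_apply, Pi.single_eq_same]; omega
        · simp only [Pi.sub_apply, Pi.single_eq_of_ne hij, sub_zero]; exact hη i
      have hlt : (Finset.univ.sum fun i => ((η - Pi.single j 1 : Fin (m + 2) → ℤ) i).toNat) < N := by
        rw [← hN]
        apply Finset.sum_lt_sum
        · intro i _
          by_cases hij : i = j
          · subst hij; simp only [Pi.sub_apply, Pi.single_eq_same]; omega
          · simp only [Pi.sub_apply, Pi.single_eq_of_ne hij]; omega
        · refine ⟨j, Finset.mem_univ j, ?_⟩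
          simp only [Pi.sub_apply, Pi.single_eq_same]
          omega
      have hsplit : η = Pi.single j 1 + (η - Pi.single j 1) := by ring
      rw [hsplit, ← tr_mul]
      exact mul_mem (tr_single_mem j) (ih _ hlt _ hη' rfl)

private lemma tr_nonneg_mem (η : Fin (m + 2) → ℤ) (hη : ∀ i, 0 ≤ η i) :
    tr η ∈ Submonoid.closure (genSet m) :=
  tr_nonneg_mem_aux _ η hη rfl

end Aux

theorem stmt3 (m : ℕ) :
    (↑(Submonoid.closure (insert (piElt m) (Set.range (simple (m := m))))) :
        Set (Shat (m + 2))) =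
      {w : Shat (m + 2) | ∀ i, 0 ≤ Multiplicative.toAdd w.left i} := by
  apply Set.eq_of_subset_of_subset
  · intro w hw
    induction hw using Submonoid.closure_induction with
    | mem x hx =>
      rcases hx with hx | ⟨i, rfl⟩
      · subst hx
        intro i
        show (0 : ℤ) ≤ Multiplicative.toAdd (piElt m).left i
        have : (piElt m).left = Multiplicative.ofAdd (Pi.single 0 (1 : ℤ)) := by
          rw [piElt, prod_simples, mul_left]; simp [tr]
        rw [this]
        show (0 : ℤ) ≤ (Pi.single 0 1 : Fin (m + 2) → ℤ) i
        by_cases h : i = 0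
        · subst h; simp
        · rw [Pi.single_eq_of_ne h]
      · intro k
        show (0 : ℤ) ≤ Multiplicative.toAdd (simple i).left k
        simp [simple]
    | one => intro i; exact le_refl 0
    | mul x y hx hy ihx ihy =>
      intro i
      rw [mul_left]
      have : Multiplicative.toAdd (x.left * (permAction (m + 2)) x.right y.left) i =
          Multiplicative.toAdd x.left i + Multiplicative.toAdd y.left (x.right⁻¹ i) := rfl
      rw [this]
      exact add_nonneg (ihx i) (ihy _)
  · intro w hw
    have : w = tr (Multiplicative.toAdd w.left) * inr w.right := by
      rw [tr]
      have : Multiplicative.ofAdd (Multiplicative.toAdd w.left) = w.left := rfl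
      rw [this, inl_left_mul_inr_right]
    rw [this]
    exact mul_mem (tr_nonneg_mem _ hw) (inr_mem _)
end

section
/- The Dunkl operators satisfy the rational Cherednik commutation relations with multiplication operators: as 𝔽-linear endomorphisms of 𝔽[x₁,…,xₙ], one has Yᵢ ∘ m_{xᵢ} − m_{xᵢ} ∘ Yᵢ = κ·id + Σ_{k≠i} s_{ik}, and for i ≠ j, Yᵢ ∘ m_{xⱼ} − m_{xⱼ} ∘ Yᵢ = −s_{ij}. -/
open MvPolynomial

noncomputable section

variable (F : Type) [Field F] [CharZero F] {n : ℕ}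

/-- The action of a permutation `w` on polynomials, permuting the variables. -/
def permOp (w : Equiv.Perm (Fin n)) : Module.End F (MvPolynomial (Fin n) F) :=
  (MvPolynomial.rename (⇑w)).toLinearMap

/-- The operator exchanging the variables `xᵢ` and `xⱼ`. -/
def swapOp (i j : Fin n) : Module.End F (MvPolynomial (Fin n) F) :=
  permOp F (Equiv.swap i j)

theorem delta_existsUnique (i j : Fin n) (hij : i ≠ j) (f : MvPolynomial (Fin n) F) :
    ∃! g : MvPolynomial (Fin n) F,
      (X i - X j) * g = f - MvPolynomial.rename (⇑(Equiv.swap i j)) f := by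
  have hne : (X i - X j : MvPolynomial (Fin n) F) ≠ 0 :=
    sub_ne_zero_of_ne (fun h => hij (MvPolynomial.X_injective h))
  have hex : ∃ g : MvPolynomial (Fin n) F,
      (X i - X j) * g = f - MvPolynomial.rename (⇑(Equiv.swap i j)) f := by
    induction f using MvPolynomial.induction_on with
    | C a => exact ⟨0, by simp⟩
    | add p q hp hq =>
      obtain ⟨g1, h1⟩ := hp
      obtain ⟨g2, h2⟩ := hq
      exact ⟨g1 + g2, by rw [map_add]; linear_combination h1 + h2⟩
    | mul_X p k hp =>
      obtain ⟨g, hg⟩ := hp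
      have hren : MvPolynomial.rename (⇑(Equiv.swap i j)) (p * X k) =
          MvPolynomial.rename (⇑(Equiv.swap i j)) p * X (Equiv.swap i j k) := by
        simp
      rcases eq_or_ne k i with rfl | hki
      · refine ⟨p + g * X j, ?_⟩
        rw [hren, Equiv.swap_apply_left]
        linear_combination X j * hg
      rcases eq_or_ne k j with rfl | hkj
      · refine ⟨-p + g * X i, ?_⟩
        rw [hren, Equiv.swap_apply_right]
        linear_combination X i * hg
      · refine ⟨g * X k, ?_⟩
        rw [hren, Equiv.swap_apply_of_ne_of_ne hki hkj]
        linear_combination X k * hg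
  obtain ⟨g, hg⟩ := hex
  exact ⟨g, hg, fun y hy => mul_left_cancel₀ hne (hy.trans hg.symm)⟩

/-- The divided-difference operator `Δ_{ij} = (xᵢ - xⱼ)⁻¹ (1 - s_{ij})`. -/
def Delta (i j : Fin n) : Module.End F (MvPolynomial (Fin n) F) where
  toFun f :=
    if h : i ≠ j then (delta_existsUnique F i j h f).exists.choose else 0
  map_add' f g := by
    by_cases h : i ≠ j
    · simp only [dif_pos h]
      apply (delta_existsUnique F i j h (f + g)).unique
      · exact (delta_existsUnique F i j h (f + g)).exists.choose_spec
      · rw [mul_add, (delta_existsUnique F i j h f).exists.choose_spec,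
          (delta_existsUnique F i j h g).exists.choose_spec, map_add]
        ring
    · simp [dif_neg h]
  map_smul' c f := by
    by_cases h : i ≠ j
    · simp only [dif_pos h, RingHom.id_apply]
      apply (delta_existsUnique F i j h (c • f)).unique
      · exact (delta_existsUnique F i j h (c • f)).exists.choose_spec
      · rw [Algebra.mul_smul_comm, (delta_existsUnique F i j h f).exists.choose_spec,
          map_smul, smul_sub]
    · simp [dif_neg h]

/-- The Dunkl operator `Yᵢ = κ ∂ᵢ + Σ_{j ≠ i} Δ_{ij}`. -/
def Dunkl (κ : F) (i : Fin n) : Module.End F (MvPolynomial (Fin n) F) :=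
  κ • (MvPolynomial.pderiv i).toLinearMap + ∑ j ∈ Finset.univ.erase i, Delta F i j

/-- The trigonometric Dunkl (Cherednik) operator `Uᵢ = xᵢ Yᵢ + Σ_{j < i} s_{ji}`. -/
def Cher (κ : F) (i : Fin n) : Module.End F (MvPolynomial (Fin n) F) :=
  LinearMap.mulLeft F (X i) * Dunkl F κ i +
    ∑ j ∈ Finset.univ.filter (fun j => j < i), swapOp F j i

lemma Delta_spec (i j : Fin n) (h : i ≠ j) (f : MvPolynomial (Fin n) F) :
    (X i - X j) * (Delta F i j f) = f - MvPolynomial.rename (⇑(Equiv.swap i j)) f := by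
  show (X i - X j) * (if h : i ≠ j then (delta_existsUnique F i j h f).exists.choose else 0) = _
  rw [dif_pos h]
  exact (delta_existsUnique F i j h f).exists.choose_spec

lemma X_sub_ne (i j : Fin n) (h : i ≠ j) : (X i - X j : MvPolynomial (Fin n) F) ≠ 0 :=
  sub_ne_zero_of_ne (fun hh => h (MvPolynomial.X_injective hh))

lemma rename_swap_mul (i j k : Fin n) (f : MvPolynomial (Fin n) F) :
    MvPolynomial.rename (⇑(Equiv.swap i j)) (X k * f) =
      X (Equiv.swap i j k) * MvPolynomial.rename (⇑(Equiv.swap i j)) f := by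
  simp

lemma Delta_mul_self (i j : Fin n) (h : i ≠ j) (f : MvPolynomial (Fin n) F) :
    Delta F i j (X i * f) = X i * Delta F i j f + MvPolynomial.rename (⇑(Equiv.swap i j)) f := by
  apply mul_left_cancel₀ (X_sub_ne F i j h)
  rw [Delta_spec F i j h, rename_swap_mul, Equiv.swap_apply_left]
  have := Delta_spec F i j h f
  linear_combination (-X i) * this

lemma Delta_mul_other (i j : Fin n) (h : i ≠ j) (f : MvPolynomial (Fin n) F) :
    Delta F i j (X j * f) = X j * Delta F i j f - MvPolynomial.rename (⇑(Equiv.swap i j)) f := by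
  apply mul_left_cancel₀ (X_sub_ne F i j h)
  rw [Delta_spec F i j h, rename_swap_mul, Equiv.swap_apply_right]
  have := Delta_spec F i j h f
  linear_combination (-X j) * this

lemma Delta_mul_third (i j k : Fin n) (h : i ≠ j) (hki : k ≠ i) (hkj : k ≠ j)
    (f : MvPolynomial (Fin n) F) :
    Delta F i j (X k * f) = X k * Delta F i j f := by
  apply mul_left_cancel₀ (X_sub_ne F i j h)
  rw [Delta_spec F i j h, rename_swap_mul, Equiv.swap_apply_of_ne_of_ne hki hkj]
  have := Delta_spec F i j h f
  linear_combination (-X k) * this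

theorem stmt7 (n : ℕ) (hn : 2 ≤ n) (κ : F) :
    (∀ i : Fin n,
      Dunkl F κ i * LinearMap.mulLeft F (X i) - LinearMap.mulLeft F (X i) * Dunkl F κ i =
        κ • (1 : Module.End F (MvPolynomial (Fin n) F)) +
          ∑ k ∈ Finset.univ.erase i, swapOp F i k) ∧
    (∀ i j : Fin n, i ≠ j →
      Dunkl F κ i * LinearMap.mulLeft F (X j) - LinearMap.mulLeft F (X j) * Dunkl F κ i =
        - swapOp F i j) := by
  constructor
  · intro i
    refine LinearMap.ext fun f => ?_
    simp only [LinearMap.sub_apply, Module.End.mul_apply, LinearMap.mulLeft_apply,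
      LinearMap.add_apply, LinearMap.smul_apply, Module.End.one_apply, Dunkl,
      LinearMap.coe_sum, Finset.sum_apply, swapOp, permOp, AlgHom.toLinearMap_apply,
      Derivation.coeFn_coe]
    have hsum : ∑ k ∈ Finset.univ.erase i, Delta F i k (X i * f)
        = ∑ k ∈ Finset.univ.erase i,
            (X i * Delta F i k f + MvPolynomial.rename (⇑(Equiv.swap i k)) f) :=
      Finset.sum_congr rfl fun k hk => Delta_mul_self F i k (Finset.ne_of_mem_erase hk).symm f
    rw [hsum, Finset.sum_add_distrib, ← Finset.mul_sum]
    have hpd : MvPolynomial.pderiv i (X i * f) = f + X i * MvPolynomial.pderiv i f := by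
      rw [pderiv_mul, pderiv_X_self, one_mul]
    rw [hpd]
    rw [smul_add, mul_add]
    rw [mul_smul_comm κ (X i : MvPolynomial (Fin n) F) (MvPolynomial.pderiv i f)]
    abel
  · intro i j hij
    refine LinearMap.ext fun f => ?_
    simp only [LinearMap.sub_apply, Module.End.mul_apply, LinearMap.mulLeft_apply,
      LinearMap.neg_apply, LinearMap.add_apply, LinearMap.smul_apply, Dunkl,
      LinearMap.coe_sum, Finset.sum_apply, swapOp, permOp, AlgHom.toLinearMap_apply,
      Derivation.coeFn_coe]
    have hpd : MvPolynomial.pderiv i (X j * f) = X j * MvPolynomial.pderiv i f := by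
      rw [pderiv_mul, pderiv_X, Pi.single_eq_of_ne hij.symm, zero_mul, zero_add]
    have hsum : ∑ k ∈ Finset.univ.erase i, (Delta F i k (X j * f) - X j * Delta F i k f)
        = - MvPolynomial.rename (⇑(Equiv.swap i j)) f := by
      have hjel : j ∈ Finset.univ.erase i := Finset.mem_erase.2 ⟨hij.symm, Finset.mem_univ j⟩
      rw [Finset.sum_eq_single_of_mem j hjel]
      · rw [Delta_mul_other F i j hij]; ring
      · intro k hk hkj
        rw [Delta_mul_third F i k j (Finset.ne_of_mem_erase hk).symm hij.symm (Ne.symm hkj)]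
        ring
    rw [Finset.sum_sub_distrib] at hsum
    have hsum2 : ∑ k ∈ Finset.univ.erase i, Delta F i k (X j * f)
        = ∑ k ∈ Finset.univ.erase i, X j * Delta F i k f
          - MvPolynomial.rename (⇑(Equiv.swap i j)) f := by
      linear_combination hsum
    rw [hsum2, hpd, mul_add, mul_smul_comm κ (X j : MvPolynomial (Fin n) F) (MvPolynomial.pderiv i f),
      ← Finset.mul_sum]
    abel
end
end
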